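/- arXiv:1502.06515 — 2 statements merged into one kernel-verified Lean document; each statement's English description precedes it below -/
import Mathlib

section
/- Let C_I > 0 and let γ be a real number with 0 < γ < 1/C_I. Then there exists a constant C > 0, depending only on γ and C_I, such that the following holds: for every real inner product space H, every finite index set ι, every family of positive reals (h_i)_{i∈ι}, every real ε ≥ 0, every pair of families of vectors (p_i)_{i∈ι}, (q_i)_{i∈ι} in H, and every real A ≥ 0 satisfying the discrete trace condition ∑_{i∈ι} h_i ‖p_i‖² ≤ C_I · A, one has: A − 2 ∑_{i∈ι} (γ h_i / (ε + γ h_i)) ⟨p_i, q_i⟩ + ∑_{i∈ι} (1 / (ε + γ h_i)) ‖q_i‖² − ∑_{i∈ι} (ε γ h_i / (ε + γ h_i)) ‖p_i‖² ≥ C · ( A + ∑_{i∈ι} (1 / (ε + h_i)) ‖q_i‖² ). -/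
/-!
On each edge, Young's inequality `2t⟪p, q⟫ ≤ δ‖q‖² + (t²/δ)‖p‖²` with `t = γ h_i` absorbs the
consistency term into the penalty and leaves `(1 - δ)/(ε + γ h_i) ‖q‖² - (γ/δ) h_i ‖p‖²`. Summed,
the trace condition bounds the negative part by `(γ C_I / δ) A`, which is less than `A` once
`γ C_I < δ < 1`; and the weights `1/(ε + γ h_i)` dominate `1/(ε + h_i)` up to the factor
`max 1 γ`.
-/

section InnerProductSpace

variable {H : Type*} [NormedAddCommGroup H] [InnerProductSpace ℝ H]

theorem two_mul_mul_inner_le (t : ℝ) {δ : ℝ} (hδ : 0 < δ) (p q : H) :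
    2 * t * inner ℝ p q ≤ δ * ‖q‖ ^ 2 + t ^ 2 / δ * ‖p‖ ^ 2 := by
  have hsq : 0 ≤ ‖δ • q - t • p‖ ^ 2 := sq_nonneg _
  rw [norm_sub_sq_real, norm_smul, norm_smul, inner_smul_left, inner_smul_right,
    real_inner_comm, mul_pow, mul_pow, Real.norm_eq_abs, Real.norm_eq_abs, sq_abs, sq_abs] at hsq
  have hδinv : δ * (t ^ 2 / δ) = t ^ 2 := by field_simp
  simp only [conj_trivial] at hsq
  nlinarith

theorem nitsche_edge_lower_bound {ε t δ : ℝ} (hε : 0 ≤ ε) (ht : 0 < t) (hδ0 : 0 < δ)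
    (hδ1 : δ ≤ 1) (p q : H) :
    (1 - δ) / (ε + t) * ‖q‖ ^ 2 - t / δ * ‖p‖ ^ 2 ≤
      1 / (ε + t) * ‖q‖ ^ 2 - ε * t / (ε + t) * ‖p‖ ^ 2
        - 2 * (t / (ε + t) * inner ℝ p q) := by
  have hs : 0 < ε + t := by positivity
  have hyoung := two_mul_mul_inner_le t hδ0 p q
  have hεδ : ε * t ≤ ε * t / δ := le_div_self (by positivity) hδ0 hδ1
  rw [← sub_nonneg]
  have hsplit : 1 / (ε + t) * ‖q‖ ^ 2 - ε * t / (ε + t) * ‖p‖ ^ 2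
        - 2 * (t / (ε + t) * inner ℝ p q) - ((1 - δ) / (ε + t) * ‖q‖ ^ 2 - t / δ * ‖p‖ ^ 2)
      = (δ * ‖q‖ ^ 2 + t ^ 2 / δ * ‖p‖ ^ 2 - 2 * t * inner ℝ p q
          + (ε * t / δ - ε * t) * ‖p‖ ^ 2) / (ε + t) := by
    field_simp
    ring
  rw [hsplit]
  apply div_nonneg _ hs.le
  nlinarith [sq_nonneg ‖p‖]

theorem one_div_add_le_max_div {ε γ h : ℝ} (hε : 0 ≤ ε) (hγ : 0 < γ) (hh : 0 < h) :
    1 / (ε + h) ≤ max 1 γ / (ε + γ * h) := by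
  rw [div_le_div_iff₀ (by positivity) (by positivity), one_mul]
  have h1 : ε ≤ max 1 γ * ε := le_mul_of_one_le_left hε (le_max_left _ _)
  have h2 : γ * h ≤ max 1 γ * h := mul_le_mul_of_nonneg_right (le_max_right _ _) hh.le
  linarith

theorem nitsche_form_lower_bound {ι : Type*} [Fintype ι] {C_I γ δ ε A : ℝ} (hγ : 0 < γ)
    (hδ0 : 0 < δ) (hδ1 : δ ≤ 1) (hε : 0 ≤ ε) {h : ι → ℝ} (hh : ∀ i, 0 < h i) (p q : ι → H)
    (htr : ∑ i, h i * ‖p i‖ ^ 2 ≤ C_I * A) :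
    (1 - γ * C_I / δ) * A + (1 - δ) / max 1 γ * ∑ i, 1 / (ε + h i) * ‖q i‖ ^ 2 ≤
      A - 2 * ∑ i, (γ * h i / (ε + γ * h i)) * inner ℝ (p i) (q i)
        + ∑ i, (1 / (ε + γ * h i)) * ‖q i‖ ^ 2
        - ∑ i, (ε * γ * h i / (ε + γ * h i)) * ‖p i‖ ^ 2 := by
  have hedge : ∀ i, (1 - δ) / (ε + γ * h i) * ‖q i‖ ^ 2 - γ / δ * (h i * ‖p i‖ ^ 2) ≤
      1 / (ε + γ * h i) * ‖q i‖ ^ 2 - ε * γ * h i / (ε + γ * h i) * ‖p i‖ ^ 2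
        - 2 * (γ * h i / (ε + γ * h i) * inner ℝ (p i) (q i)) := fun i => by
    have := nitsche_edge_lower_bound hε (mul_pos hγ (hh i)) hδ0 hδ1 (p i) (q i)
    convert this using 1 <;> ring
  have hweight : ∀ i, (1 - δ) / max 1 γ * (1 / (ε + h i) * ‖q i‖ ^ 2) ≤
      (1 - δ) / (ε + γ * h i) * ‖q i‖ ^ 2 := fun i => by
    have := one_div_add_le_max_div hε hγ (hh i)
    calc (1 - δ) / max 1 γ * (1 / (ε + h i) * ‖q i‖ ^ 2)
        ≤ (1 - δ) / max 1 γ * (max 1 γ / (ε + γ * h i) * ‖q i‖ ^ 2) := by gcongr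
      _ = (1 - δ) / (ε + γ * h i) * ‖q i‖ ^ 2 := by field_simp
  have htr' : γ / δ * ∑ i, h i * ‖p i‖ ^ 2 ≤ γ * C_I / δ * A := by
    calc γ / δ * ∑ i, h i * ‖p i‖ ^ 2 ≤ γ / δ * (C_I * A) := by gcongr
      _ = γ * C_I / δ * A := by ring
  have hsum :
      ∑ i, ((1 - δ) / max 1 γ * (1 / (ε + h i) * ‖q i‖ ^ 2) - γ / δ * (h i * ‖p i‖ ^ 2)) ≤
      ∑ i, (1 / (ε + γ * h i) * ‖q i‖ ^ 2 - ε * γ * h i / (ε + γ * h i) * ‖p i‖ ^ 2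
        - 2 * (γ * h i / (ε + γ * h i) * inner ℝ (p i) (q i))) :=
    Finset.sum_le_sum fun i _ => by linarith [hweight i, hedge i]
  simp only [Finset.sum_sub_distrib, ← Finset.mul_sum] at hsum
  linarith

end InnerProductSpace

/-- Abstract coercivity (stability) of the Nitsche bilinear form: if
`0 < γ < 1/C_I`, there is `C > 0` (depending only on `γ` and `C_I`) such that
for any real inner product space `H`, finite family of positive weights `h_i`,
`ε ≥ 0`, vectors `p_i, q_i` and `A ≥ 0` with the discrete trace condition
`∑ h_i ‖p_i‖² ≤ C_I A`, one has
`A − 2∑ (γh_i/(ε+γh_i))⟨p_i,q_i⟩ + ∑ (1/(ε+γh_i))‖q_i‖² − ∑ (εγh_i/(ε+γh_i))‖p_i‖²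
  ≥ C (A + ∑ (1/(ε+h_i))‖q_i‖²)`. -/
theorem nitsche_stability (C_I : ℝ) (hCI : 0 < C_I) (γ : ℝ) (hγ0 : 0 < γ)
    (hγ : γ < 1 / C_I) :
    ∃ C : ℝ, 0 < C ∧
      ∀ (H : Type) [NormedAddCommGroup H] [InnerProductSpace ℝ H]
        (ι : Type) [Fintype ι] (h : ι → ℝ), (∀ i, 0 < h i) →
        ∀ ε : ℝ, 0 ≤ ε →
        ∀ (p q : ι → H) (A : ℝ), 0 ≤ A →
        (∑ i, h i * ‖p i‖ ^ 2 ≤ C_I * A) →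
        A - 2 * ∑ i, (γ * h i / (ε + γ * h i)) * (inner ℝ (p i) (q i) : ℝ)
            + ∑ i, (1 / (ε + γ * h i)) * ‖q i‖ ^ 2
            - ∑ i, (ε * γ * h i / (ε + γ * h i)) * ‖p i‖ ^ 2
          ≥ C * (A + ∑ i, (1 / (ε + h i)) * ‖q i‖ ^ 2) := by
  have hκ : γ * C_I < 1 := by rwa [lt_div_iff₀ hCI] at hγ
  obtain ⟨δ, hκδ, hδ1⟩ := exists_between hκ
  have hδ0 : 0 < δ := (mul_pos hγ0 hCI).trans hκδ
  refine ⟨min (1 - γ * C_I / δ) ((1 - δ) / max 1 γ),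
    lt_min (sub_pos.2 ((div_lt_one hδ0).2 hκδ)) (div_pos (sub_pos.2 hδ1) (by positivity)), ?_⟩
  intro H _ _ ι _ h hh ε hε p q A hA htr
  have hS : 0 ≤ ∑ i, 1 / (ε + h i) * ‖q i‖ ^ 2 :=
    Finset.sum_nonneg fun i _ => by have := hh i; positivity
  refine le_trans ?_ (nitsche_form_lower_bound hγ0 hδ0 hδ1.le hε hh p q htr)
  rw [mul_add]
  exact add_le_add (mul_le_mul_of_nonneg_right (min_le_left _ _) hA)
    (mul_le_mul_of_nonneg_right (min_le_right _ _) hS)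
end

section
/- Let H be a real inner product space, ι a finite index set, γ > 0 a real number, ε > 0 a real number, and (h_i)_{i∈ι} a family of positive reals satisfying h_i ≤ ε for every i ∈ ι. Then for all families of vectors (R_i)_{i∈ι}, (e_i)_{i∈ι} and (w_i)_{i∈ι} in H, one has ∑_{i∈ι} [ −(γ h_i / ((ε + γ h_i) ε)) ⟨R_i, w_i⟩ − (1/ε) ⟨e_i, w_i⟩ ] ≤ [ √2 · γ · ( ∑_{i∈ι} (h_i / (ε + γ h_i)²) ‖R_i‖² )^{1/2} + 2 · ( ∑_{i∈ι} (1 / (ε + h_i)) ‖e_i‖² )^{1/2} ] · ( ∑_{i∈ι} (1 / (ε + h_i)) ‖w_i‖² )^{1/2}. -/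
/-!
Bound each summand by Cauchy–Schwarz in `H`, and its two scalar coefficients using `h ≤ ε`:
`1 / ε ≤ 2 / (ε + h)` and `√h √(ε + h) ≤ √2 ε`, so that `γ h / ((ε + γ h) ε)` is at most
`√2 γ · (√h / (ε + γ h)) · (1 / √(ε + h))`. A weighted Cauchy–Schwarz inequality for the finite
sums then gives the claim.
-/

open Finset

theorem Real.sum_sqrt_mul_mul_le {ι : Type*} (s : Finset ι) {p q : ι → ℝ}
    (hp : ∀ i ∈ s, 0 ≤ p i) (hq : ∀ i ∈ s, 0 ≤ q i) (x y : ι → ℝ) :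
    ∑ i ∈ s, √(p i * q i) * (x i * y i) ≤
      √(∑ i ∈ s, p i * x i ^ 2) * √(∑ i ∈ s, q i * y i ^ 2) := by
  have hsq {r : ι → ℝ} (hr : ∀ i ∈ s, 0 ≤ r i) (z : ι → ℝ) :
      ∑ i ∈ s, (√(r i) * z i) ^ 2 = ∑ i ∈ s, r i * z i ^ 2 :=
    sum_congr rfl fun i hi => by rw [mul_pow, Real.sq_sqrt (hr i hi)]
  have hprod : ∑ i ∈ s, √(p i * q i) * (x i * y i) =
      ∑ i ∈ s, (√(p i) * x i) * (√(q i) * y i) :=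
    sum_congr rfl fun i hi => by rw [Real.sqrt_mul (hp i hi)]; ring
  rw [hprod, ← hsq hp, ← hsq hq]
  exact Real.sum_mul_le_sqrt_mul_sqrt s _ _

theorem neg_mul_inner_le_of_le {H : Type*} [NormedAddCommGroup H] [InnerProductSpace ℝ H]
    {c d : ℝ} (hc : 0 ≤ c) (hcd : c ≤ d) (x y : H) :
    -(c * inner ℝ x y) ≤ d * (‖x‖ * ‖y‖) :=
  calc -(c * inner ℝ x y) = c * -inner ℝ x y := by ring
    _ ≤ c * (‖x‖ * ‖y‖) := by
      gcongr; exact (neg_le_abs _).trans (abs_real_inner_le_norm x y)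
    _ ≤ d * (‖x‖ * ‖y‖) := by gcongr

section SmallEdge

variable {γ ε h : ℝ}

theorem div_mul_le_sqrt_two_mul_sqrt (hγ : 0 ≤ γ) (hε : 0 < ε) (hh : 0 ≤ h) (hhε : h ≤ ε) :
    γ * h / ((ε + γ * h) * ε) ≤ √2 * γ * √(h / (ε + γ * h) ^ 2 * (1 / (ε + h))) := by
  have hεγ : 0 < ε + γ * h := by positivity
  have hsq : √2 * γ * √(h / (ε + γ * h) ^ 2 * (1 / (ε + h))) =
      √(2 * γ ^ 2 * (h / (ε + γ * h) ^ 2 * (1 / (ε + h)))) := by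
    rw [Real.sqrt_mul (by positivity : (0 : ℝ) ≤ 2 * γ ^ 2), Real.sqrt_mul zero_le_two,
      Real.sqrt_sq hγ]
  rw [hsq]
  apply Real.le_sqrt_of_sq_le
  rw [div_pow, div_le_iff₀ (by positivity)]
  have hsmall : h * (ε + h) ≤ 2 * ε ^ 2 := by nlinarith
  field_simp
  nlinarith [mul_le_mul_of_nonneg_left hsmall (by positivity : 0 ≤ γ ^ 2 * h)]

theorem one_div_le_two_mul_one_div_add (hε : 0 < ε) (hh : 0 ≤ h) (hhε : h ≤ ε) :
    1 / ε ≤ 2 * (1 / (ε + h)) := by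
  rw [← mul_div_assoc, mul_one, div_le_div_iff₀ hε (by positivity)]
  linarith

theorem small_edge_term_le {H : Type*} [NormedAddCommGroup H] [InnerProductSpace ℝ H]
    (hγ : 0 ≤ γ) (hε : 0 < ε) (hh : 0 ≤ h) (hhε : h ≤ ε) (R e w : H) :
    -(γ * h / ((ε + γ * h) * ε)) * inner ℝ R w - 1 / ε * inner ℝ e w ≤
      √2 * γ * (√(h / (ε + γ * h) ^ 2 * (1 / (ε + h))) * (‖R‖ * ‖w‖)) +
        2 * (√(1 / (ε + h) * (1 / (ε + h))) * (‖e‖ * ‖w‖)) := by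
  have hR := neg_mul_inner_le_of_le (by positivity)
    (div_mul_le_sqrt_two_mul_sqrt hγ hε hh hhε) R w
  have he := neg_mul_inner_le_of_le (by positivity)
    (one_div_le_two_mul_one_div_add hε hh hhε) e w
  rw [Real.sqrt_mul_self (by positivity)]
  linarith

end SmallEdge

/-- Abstract form of the estimates on the part `Γ ∖ Γ_ε` of the boundary
(edges with `h_E ≤ ε`):
`∑ [−(γh_i/((ε+γh_i)ε))⟨R_i,w_i⟩ − (1/ε)⟨e_i,w_i⟩]
  ≤ [√2 γ (∑ (h_i/(ε+γh_i)²)‖R_i‖²)^{1/2} + 2 (∑ (1/(ε+h_i))‖e_i‖²)^{1/2}]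
      · (∑ (1/(ε+h_i))‖w_i‖²)^{1/2}`. -/
theorem boundary_small_edge_estimate {H : Type*} [NormedAddCommGroup H]
    [InnerProductSpace ℝ H] {ι : Type*} [Fintype ι]
    (γ ε : ℝ) (hγ : 0 < γ) (hε : 0 < ε)
    (h : ι → ℝ) (hh : ∀ i, 0 < h i) (hhε : ∀ i, h i ≤ ε)
    (R e w : ι → H) :
    ∑ i, (-(γ * h i / ((ε + γ * h i) * ε)) * (inner ℝ (R i) (w i) : ℝ)
        - (1 / ε) * (inner ℝ (e i) (w i) : ℝ)) ≤
      (Real.sqrt 2 * γ * Real.sqrt (∑ i, (h i / (ε + γ * h i) ^ 2) * ‖R i‖ ^ 2)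
          + 2 * Real.sqrt (∑ i, (1 / (ε + h i)) * ‖e i‖ ^ 2)) *
        Real.sqrt (∑ i, (1 / (ε + h i)) * ‖w i‖ ^ 2) := by
  have hq : ∀ i ∈ univ, 0 ≤ 1 / (ε + h i) := fun i _ => by have := hh i; positivity
  have hp : ∀ i ∈ univ, 0 ≤ h i / (ε + γ * h i) ^ 2 := fun i _ => by have := hh i; positivity
  calc _ ≤ ∑ i, (√2 * γ * (√(h i / (ε + γ * h i) ^ 2 * (1 / (ε + h i))) * (‖R i‖ * ‖w i‖)) +
          2 * (√(1 / (ε + h i) * (1 / (ε + h i))) * (‖e i‖ * ‖w i‖))) :=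
        sum_le_sum fun i _ => small_edge_term_le hγ.le hε (hh i).le (hhε i) (R i) (e i) (w i)
    _ = √2 * γ * ∑ i, √(h i / (ε + γ * h i) ^ 2 * (1 / (ε + h i))) * (‖R i‖ * ‖w i‖) +
          2 * ∑ i, √(1 / (ε + h i) * (1 / (ε + h i))) * (‖e i‖ * ‖w i‖) := by
        rw [sum_add_distrib, mul_sum, mul_sum]
    _ ≤ √2 * γ * (√(∑ i, (h i / (ε + γ * h i) ^ 2) * ‖R i‖ ^ 2) *
            √(∑ i, (1 / (ε + h i)) * ‖w i‖ ^ 2)) +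
          2 * (√(∑ i, (1 / (ε + h i)) * ‖e i‖ ^ 2) * √(∑ i, (1 / (ε + h i)) * ‖w i‖ ^ 2)) := by
        gcongr
        · exact Real.sum_sqrt_mul_mul_le univ hp hq _ _
        · exact Real.sum_sqrt_mul_mul_le univ hq hq _ _
    _ = _ := by ring
end
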